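/- arXiv:2012.06411 — 2 statements merged into one kernel-verified Lean document; each statement's English description precedes it below -/
import Mathlib

section
/- Let X be a real Banach space, F a closed subspace with dim(X/F) = m ≥ 1, and Q : X → X/F the quotient map. Let 0 < ε < 1 and let Z be a subspace of X such that ‖Q(z)‖ ≤ (ε/(2m))‖z‖ for all z ∈ Z. Then there exists a bounded linear map T : Z → X with T(z) ∈ F for all z ∈ Z and (1 − ε)‖z‖ ≤ ‖T(z)‖ ≤ (1 + ε)‖z‖ for all z ∈ Z; in particular F contains a subspace (1+ε)/(1−ε)-isomorphic to Z. -/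
/-!
Choose an Auerbach basis `e₁, …, e_m` of the quotient `X ⧸ F` (unit vectors whose coordinate
functionals have norm at most one; it comes from a basis maximising the determinant over
products of unit spheres) and lift each `eᵢ` to some `xᵢ ∈ X` with `‖xᵢ‖ < 2`. Then
`R q = ∑ eᵢ*(q) xᵢ` is a right inverse of the quotient map `Q` with `‖R q‖ ≤ 2m ‖q‖`, so
`T z = z - R (Q z)` lies in `F` and differs from `z` by at most `2m ‖Q z‖ ≤ ε ‖z‖`.
-/

open Module Function Set Metric

theorem MultilinearMap.abs_apply_update_le_of_isMaxOn {ι Y : Type*} [DecidableEq ι]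
    [NormedAddCommGroup Y] [NormedSpace ℝ Y] {f : MultilinearMap ℝ (fun _ : ι => Y) ℝ}
    {v : ι → Y} (hv : IsMaxOn (fun w => |f w|) (univ.pi fun _ => sphere 0 1) v)
    (hvS : v ∈ univ.pi fun _ => sphere (0 : Y) 1) (i : ι) (y : Y) :
    |f (update v i y)| ≤ |f v| * ‖y‖ := by
  rcases eq_or_ne y 0 with rfl | hy0
  · simp [f.map_update_zero]
  have hy : ‖y‖ ≠ 0 := norm_ne_zero_iff.2 hy0
  have hmem : update v i (‖y‖⁻¹ • y) ∈ univ.pi fun _ => sphere (0 : Y) 1 := by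
    simp only [mem_univ_pi, mem_sphere_zero_iff_norm] at hvS ⊢
    intro j
    rcases eq_or_ne j i with rfl | hj
    · rw [update_self, norm_smul, norm_inv, norm_norm, inv_mul_cancel₀ hy]
    · rw [update_of_ne hj, hvS j]
  have hscale : f (update v i y) = ‖y‖ • f (update v i (‖y‖⁻¹ • y)) := by
    rw [← f.map_update_smul, smul_inv_smul₀ hy]
  calc |f (update v i y)| = ‖y‖ * |f (update v i (‖y‖⁻¹ • y))| := by
        rw [hscale, smul_eq_mul, abs_mul, abs_norm]
    _ ≤ ‖y‖ * |f v| := mul_le_mul_of_nonneg_left (hv hmem) (norm_nonneg y)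
    _ = |f v| * ‖y‖ := mul_comm _ _

namespace Module.Basis

variable {ι Y : Type*} [NormedAddCommGroup Y] [NormedSpace ℝ Y]

structure IsAuerbach (e : Basis ι ℝ Y) : Prop where
  norm_eq_one : ∀ i, ‖e i‖ = 1
  abs_coord_le : ∀ i y, |e.coord i y| ≤ ‖y‖

theorem normalize_mem_pi_sphere (b : Basis ι ℝ Y) :
    (fun i => ‖b i‖⁻¹ • b i) ∈ univ.pi fun _ => sphere (0 : Y) 1 :=
  fun i _ => by
    beta_reduce
    rw [mem_sphere_zero_iff_norm, _root_.norm_smul, norm_inv, norm_norm,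
      inv_mul_cancel₀ (norm_ne_zero_iff.2 (b.ne_zero i))]

theorem IsAuerbach.norm_sum_coord_smul_le [Fintype ι] {E : Type*} [SeminormedAddCommGroup E]
    [NormedSpace ℝ E] {e : Basis ι ℝ Y} (he : e.IsAuerbach) {x : ι → E} {c : ℝ}
    (hx : ∀ i, ‖x i‖ ≤ c) (y : Y) :
    ‖∑ i, e.coord i y • x i‖ ≤ c * Fintype.card ι * ‖y‖ :=
  calc ‖∑ i, e.coord i y • x i‖ ≤ ∑ i, ‖e.coord i y • x i‖ := norm_sum_le _ _
    _ ≤ ∑ _i : ι, ‖y‖ * c := Finset.sum_le_sum fun i _ => by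
        rw [_root_.norm_smul, Real.norm_eq_abs]
        exact mul_le_mul (he.abs_coord_le i y) (hx i) (norm_nonneg _) (norm_nonneg _)
    _ = c * Fintype.card ι * ‖y‖ := by
        rw [Finset.sum_const, Finset.card_univ, nsmul_eq_mul]; ring

variable [Fintype ι] [DecidableEq ι]

theorem continuous_det (b : Basis ι ℝ Y) : Continuous fun v : ι → Y => b.det v := by
  have : FiniteDimensional ℝ Y := .of_basis b
  simp_rw [Basis.det_apply]
  refine Continuous.matrix_det (continuous_matrix fun i j => ?_)
  exact (b.coord i).continuous_of_finiteDimensional.comp (continuous_apply j)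

theorem det_ne_zero_of_isMaxOn (b : Basis ι ℝ Y) {v : ι → Y}
    (hv : IsMaxOn (fun w => |b.det w|) (univ.pi fun _ => sphere 0 1) v) : b.det v ≠ 0 := by
  have hnorm : b.det (fun i => ‖b i‖⁻¹ • b i) ≠ 0 := by
    rw [b.det.map_smul_univ, b.det_self, smul_eq_mul, mul_one]
    exact Finset.prod_ne_zero_iff.2 fun i _ => inv_ne_zero (norm_ne_zero_iff.2 (b.ne_zero i))
  intro hv0
  have := hv b.normalize_mem_pi_sphere
  simp only [mem_ofPred_eq, hv0, abs_zero, abs_nonpos_iff] at this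
  exact hnorm this

theorem exists_isAuerbach (b : Basis ι ℝ Y) : ∃ e : Basis ι ℝ Y, e.IsAuerbach := by
  have : FiniteDimensional ℝ Y := .of_basis b
  have hS : IsCompact (univ.pi fun _ : ι => sphere (0 : Y) 1) :=
    isCompact_univ_pi fun _ => isCompact_sphere 0 1
  obtain ⟨v, hvS, hv⟩ := hS.exists_isMaxOn ⟨_, b.normalize_mem_pi_sphere⟩
    (continuous_abs.comp b.continuous_det).continuousOn
  have hdet := b.det_ne_zero_of_isMaxOn hv
  obtain ⟨hli, hsp⟩ := b.is_basis_iff_det.2 (isUnit_iff_ne_zero.2 hdet)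
  refine ⟨Basis.mk hli hsp.ge, fun i => by simpa using hvS i trivial, fun i y => ?_⟩
  -- Cramer's rule: the `i`-th coordinate of `y` is `det (update v i y) / det v`.
  have hcramer : b.det v * (Basis.mk hli hsp.ge).coord i y = b.det (update v i y) :=
    congr($(b.det_smul_mk_coord_eq_det_update hli hsp.ge i) y)
  refine le_of_mul_le_mul_left ?_ (abs_pos.2 hdet)
  rw [← abs_mul, hcramer]
  exact MultilinearMap.abs_apply_update_le_of_isMaxOn (f := b.det.toMultilinearMap) hv hvS i y

end Module.Basis

theorem Submodule.exists_rightInverse_mkQ_norm_le {X : Type*} [SeminormedAddCommGroup X]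
    [NormedSpace ℝ X] (F : Submodule ℝ X) [IsClosed (F : Set X)] [FiniteDimensional ℝ (X ⧸ F)] :
    ∃ R : (X ⧸ F) →ₗ[ℝ] X, (∀ q, F.mkQ (R q) = q) ∧
      ∀ q, ‖R q‖ ≤ 2 * finrank ℝ (X ⧸ F) * ‖q‖ := by
  obtain ⟨e, he⟩ := (finBasis ℝ (X ⧸ F)).exists_isAuerbach
  have hlift : ∀ i, ∃ x : X, F.mkQ x = e i ∧ ‖x‖ ≤ 2 := fun i => by
    obtain ⟨x, hx, hlt⟩ := Submodule.Quotient.norm_mk_lt (e i) one_pos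
    exact ⟨x, hx, by linarith [he.norm_eq_one i]⟩
  choose x hQx hx using hlift
  refine ⟨∑ i, (e.coord i).smulRight (x i), fun q => ?_, fun q => ?_⟩
  · simp [map_sum, hQx, e.sum_repr]
  · simpa using he.norm_sum_coord_smul_le hx q

theorem statement2_general {X : Type*} [NormedAddCommGroup X] [NormedSpace ℝ X]
    (F : Submodule ℝ X) (hFc : IsClosed (F : Set X)) (m : ℕ) (hm : 1 ≤ m)
    [FiniteDimensional ℝ (X ⧸ F)] (hdim : Module.finrank ℝ (X ⧸ F) = m)
    (ε : ℝ) (Z : Submodule ℝ X)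
    (hZ : ∀ z ∈ Z, ‖F.mkQ z‖ ≤ ε / (2 * m) * ‖z‖) :
    ∃ T : Z →L[ℝ] X, (∀ z : Z, T z ∈ F) ∧
      ∀ z : Z, (1 - ε) * ‖z‖ ≤ ‖T z‖ ∧ ‖T z‖ ≤ (1 + ε) * ‖z‖ := by
  obtain ⟨R, hQR, hR⟩ := F.exists_rightInverse_mkQ_norm_le
  have hsmall : ∀ z : Z, ‖R (F.mkQ z)‖ ≤ ε * ‖z‖ := fun z =>
    calc ‖R (F.mkQ z)‖ ≤ 2 * m * ‖F.mkQ z‖ := hdim ▸ hR _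
      _ ≤ 2 * m * (ε / (2 * m) * ‖z‖) := by gcongr; exact hZ z z.2
      _ = ε * ‖z‖ := by field_simp
  let T : Z →ₗ[ℝ] X := Z.subtype - R ∘ₗ F.mkQ ∘ₗ Z.subtype
  have hT : ∀ z, (1 - ε) * ‖z‖ ≤ ‖T z‖ ∧ ‖T z‖ ≤ (1 + ε) * ‖z‖ := fun z => by
    have hTz : T z = z - R (F.mkQ z) := rfl
    rw [hTz]
    constructor <;> linarith [norm_sub_norm_le (z : X) (R (F.mkQ z)),
      norm_sub_le (z : X) (R (F.mkQ z)), hsmall z, Submodule.norm_coe z]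
  refine ⟨T.mkContinuous (1 + ε) fun z => (hT z).2, fun z => ?_, hT⟩
  rw [LinearMap.mkContinuous_apply, ← Submodule.ker_mkQ F, LinearMap.mem_ker]
  simp only [T, LinearMap.sub_apply, LinearMap.comp_apply, map_sub, hQR, sub_self]

/-- Let `F` be a closed subspace of a real Banach space `X` with
`dim (X ⧸ F) = m ≥ 1` and let `Q = F.mkQ : X → X ⧸ F` be the quotient map.  If `0 < ε < 1`
and `Z` is a subspace of `X` with `‖Q z‖ ≤ (ε / (2m)) ‖z‖` for all `z ∈ Z`, then there is a
bounded linear map `T : Z → X` taking values in `F` and satisfying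
`(1 - ε) ‖z‖ ≤ ‖T z‖ ≤ (1 + ε) ‖z‖` for all `z ∈ Z`; in particular `F` contains a subspace
`(1+ε)/(1-ε)`-isomorphic to `Z`. -/
theorem statement2 {X : Type*} [NormedAddCommGroup X] [NormedSpace ℝ X] [CompleteSpace X]
    (F : Submodule ℝ X) (hFc : IsClosed (F : Set X)) (m : ℕ) (hm : 1 ≤ m)
    [FiniteDimensional ℝ (X ⧸ F)] (hdim : Module.finrank ℝ (X ⧸ F) = m)
    (ε : ℝ) (hε0 : 0 < ε) (hε1 : ε < 1) (Z : Submodule ℝ X)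
    (hZ : ∀ z ∈ Z, ‖F.mkQ z‖ ≤ ε / (2 * m) * ‖z‖) :
    ∃ T : Z →L[ℝ] X, (∀ z : Z, T z ∈ F) ∧
      ∀ z : Z, (1 - ε) * ‖z‖ ≤ ‖T z‖ ∧ ‖T z‖ ≤ (1 + ε) * ‖z‖ :=
  statement2_general F hFc m hm hdim ε Z hZ
end

section
/- For n ≥ 1 let u_n : ℕ≥1 → ℝ be the sequence u_n = 2^{(1−n)/2} Σ_{j=2^{n−1}}^{2^n−1} e_j, where (e_j) is the unit vector basis. Then for every N ≥ 1 and all nonnegative reals λ_1, ..., λ_N, sup{ Σ_j (Σ_{n=1}^N λ_n (u_n)_j) x_j : x finitely supported, ‖x‖_{S²} ≤ 1 } = Σ_{n=1}^N λ_n. In particular the functional norm of Σ_{n=1}^N λ_n u_n on the space normed by ‖·‖_{S²} equals Σ_{n=1}^N λ_n. -/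
/-- A finite nonempty set `A` of positive integers is *admissible* if `|A| ≤ min A`.
(Note that `A.card ≤ A.min'` forces every element of `A` to be a positive integer.) -/
def Admissible (A : Finset ℕ) : Prop :=
  ∃ h : A.Nonempty, A.card ≤ A.min' h

/-- The Schreier-2 norm of a sequence: `‖x‖_{S²} = sup { √(∑_{j ∈ A} x_j²) : A admissible }`,
the norm of the 2-convexification `S²` of the Schreier space. -/
noncomputable def schreierTwoNorm (x : ℕ → ℝ) : ℝ :=
  sSup {r : ℝ | ∃ A : Finset ℕ, Admissible A ∧ r = Real.sqrt (∑ j ∈ A, x j ^ 2)}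

/-- The block sequences `u_n = 2^{(1-n)/2} ∑_{j=2^{n-1}}^{2^n - 1} e_j` (for `n ≥ 1`). -/
noncomputable def schreierBlock (n : ℕ) : ℕ → ℝ :=
  fun j => if 2 ^ (n - 1) ≤ j ∧ j ≤ 2 ^ n - 1 then (2 : ℝ) ^ ((1 - (n : ℝ)) / 2) else 0

/-! The upper bound pairs each `u_n` with `x` by Cauchy–Schwarz on the support of `u_n`, the
admissible block `[2^(n-1), 2^n)`, on which `u_n` has ℓ₂-norm 1. For the lower bound take
`x = u_1 + ⋯ + u_N`, which satisfies `x_j² ≤ 2^(-⌊log₂ j⌋)`. If `A` is admissible and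
`2^(k-1) ≤ min A < 2^k`, at most `2^k - min A` elements of `A` lie below `2^k`, each of weight
`2^(1-k)`, and the others, at most `min A` of them, weigh at most `2^(-k)` each; so
`∑_{j ∈ A} x_j² ≤ 1`. -/

open Finset

def dyadicBlock (n : ℕ) : Finset ℕ := Icc (2 ^ (n - 1)) (2 ^ n - 1)

lemma mem_dyadicBlock {n j : ℕ} : j ∈ dyadicBlock n ↔ j ≠ 0 ∧ n = Nat.log 2 j + 1 := by
  rcases n with _ | m
  · simp [dyadicBlock]
  have hpos : 1 ≤ 2 ^ m := Nat.one_le_two_pow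
  have hpos' : 1 ≤ 2 ^ (m + 1) := Nat.one_le_two_pow
  simp only [dyadicBlock, mem_Icc, Nat.add_sub_cancel, add_left_inj]
  constructor
  · rintro ⟨hlo, hhi⟩
    have hj : j ≠ 0 := by omega
    exact ⟨hj, ((Nat.log_eq_iff (Or.inr ⟨one_lt_two, hj⟩)).2 ⟨hlo, by omega⟩).symm⟩
  · rintro ⟨hj, rfl⟩
    have := (Nat.log_eq_iff (b := 2) (Or.inr ⟨one_lt_two, hj⟩)).1 rfl
    omega

lemma card_dyadicBlock {n : ℕ} (hn : n ≠ 0) : #(dyadicBlock n) = 2 ^ (n - 1) := by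
  obtain ⟨m, rfl⟩ := Nat.exists_eq_succ_of_ne_zero hn
  have : 1 ≤ 2 ^ m := Nat.one_le_two_pow
  rw [dyadicBlock, Nat.card_Icc, Nat.succ_sub_one, pow_succ]
  omega

lemma admissible_dyadicBlock {n : ℕ} (hn : n ≠ 0) : Admissible (dyadicBlock n) := by
  have hne : (dyadicBlock n).Nonempty := by
    rw [← card_pos, card_dyadicBlock hn]
    positivity
  refine ⟨hne, ?_⟩
  rw [card_dyadicBlock hn]
  exact (mem_Icc.1 (min'_mem _ hne)).1

lemma schreierBlock_eq_zero {n j : ℕ} (hj : j ∉ dyadicBlock n) : schreierBlock n j = 0 := by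
  rw [dyadicBlock, mem_Icc] at hj
  simp [schreierBlock, hj]

lemma schreierBlock_sq {n j : ℕ} (hj : j ∈ dyadicBlock n) :
    schreierBlock n j ^ 2 = ((2 : ℝ) ^ Nat.log 2 j)⁻¹ := by
  have hn := (mem_dyadicBlock.1 hj).2
  rw [dyadicBlock, mem_Icc] at hj
  rw [schreierBlock, if_pos hj, ← Real.rpow_mul_natCast zero_le_two, hn, ← Real.rpow_natCast,
    ← Real.rpow_neg zero_le_two]
  push_cast
  ring_nf

lemma sum_sq_schreierBlock {n : ℕ} (hn : n ≠ 0) :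
    ∑ j ∈ dyadicBlock n, schreierBlock n j ^ 2 = 1 := by
  have hlog : ∀ j ∈ dyadicBlock n, Nat.log 2 j = n - 1 := fun j hj => by
    have := (mem_dyadicBlock.1 hj).2
    omega
  rw [sum_congr rfl fun j hj => by rw [schreierBlock_sq hj, hlog j hj], sum_const,
    card_dyadicBlock hn, nsmul_eq_mul]
  push_cast
  exact mul_inv_cancel₀ (by positivity)

lemma admissible_singleton_one : Admissible {1} := ⟨singleton_nonempty 1, by simp⟩

lemma bddAbove_sqrt_sum_sq_admissible {x : ℕ → ℝ} (hx : (Function.support x).Finite) :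
    BddAbove {r : ℝ | ∃ A : Finset ℕ, Admissible A ∧ r = Real.sqrt (∑ j ∈ A, x j ^ 2)} := by
  refine ⟨Real.sqrt (∑ j ∈ hx.toFinset, x j ^ 2), ?_⟩
  rintro r ⟨A, -, rfl⟩
  refine Real.sqrt_le_sqrt ?_
  rw [← sum_filter_ne_zero]
  refine sum_le_sum_of_subset_of_nonneg (fun j hj => ?_) fun j _ _ => sq_nonneg _
  exact hx.mem_toFinset.2 fun h => (mem_filter.1 hj).2 (by simp [h])

lemma sqrt_sum_sq_le_schreierTwoNorm {x : ℕ → ℝ} (hx : (Function.support x).Finite)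
    {A : Finset ℕ} (hA : Admissible A) : Real.sqrt (∑ j ∈ A, x j ^ 2) ≤ schreierTwoNorm x :=
  le_csSup (bddAbove_sqrt_sum_sq_admissible hx) ⟨A, hA, rfl⟩

lemma schreierTwoNorm_le_one {x : ℕ → ℝ} (h : ∀ A, Admissible A → ∑ j ∈ A, x j ^ 2 ≤ 1) :
    schreierTwoNorm x ≤ 1 := by
  refine csSup_le ⟨_, {1}, admissible_singleton_one, rfl⟩ ?_
  rintro r ⟨A, hA, rfl⟩
  exact Real.sqrt_le_one.2 (h A hA)

lemma sum_mul_le_schreierTwoNorm {x : ℕ → ℝ} (hx : (Function.support x).Finite)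
    {A : Finset ℕ} (hA : Admissible A) (u : ℕ → ℝ) :
    ∑ j ∈ A, u j * x j ≤ Real.sqrt (∑ j ∈ A, u j ^ 2) * schreierTwoNorm x :=
  (Real.sum_mul_le_sqrt_mul_sqrt A u x).trans
    (mul_le_mul_of_nonneg_left (sqrt_sum_sq_le_schreierTwoNorm hx hA) (Real.sqrt_nonneg _))

lemma sum_inv_two_pow_log_le_one {A : Finset ℕ} (hA : Admissible A) :
    ∑ j ∈ A, ((2 : ℝ) ^ Nat.log 2 j)⁻¹ ≤ 1 := by
  obtain ⟨hne, hcard⟩ := hA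
  set a := A.min' hne
  set k := Nat.log 2 a + 1 with hk
  have ha : a ≠ 0 := by have := hne.card_pos; omega
  have hak : a < 2 ^ k := Nat.lt_pow_succ_log_self one_lt_two a
  set q : ℝ := (2 : ℝ) ^ k
  have hq : 0 < q := by positivity
  have hterm : ∀ j ∈ A, ((2 : ℝ) ^ Nat.log 2 j)⁻¹ ≤ q⁻¹ + if j < 2 ^ k then q⁻¹ else 0 := by
    intro j hj
    have hlog : Nat.log 2 a ≤ Nat.log 2 j := Nat.log_mono_right (min'_le A j hj)
    split_ifs with hjk
    · have : Nat.log 2 j < k := Nat.log_lt_of_lt_pow (by have := min'_le A j hj; omega) hjk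
      rw [show Nat.log 2 j = Nat.log 2 a by omega, show q = 2 ^ Nat.log 2 a * 2 from pow_succ _ _]
      exact le_of_eq (by ring)
    · have : k ≤ Nat.log 2 j := Nat.le_log_of_pow_le one_lt_two (not_lt.1 hjk)
      rw [add_zero]
      exact inv_anti₀ hq (pow_le_pow_right₀ one_le_two this)
  have hsmall : #(A.filter (· < 2 ^ k)) ≤ 2 ^ k - a := by
    calc #(A.filter (· < 2 ^ k)) ≤ #(Ico a (2 ^ k)) :=
          card_le_card fun j hj => by
            rw [mem_filter] at hj
            exact mem_Ico.2 ⟨min'_le A j hj.1, hj.2⟩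
      _ = 2 ^ k - a := Nat.card_Ico _ _
  calc ∑ j ∈ A, ((2 : ℝ) ^ Nat.log 2 j)⁻¹
      ≤ ∑ j ∈ A, (q⁻¹ + if j < 2 ^ k then q⁻¹ else 0) := sum_le_sum hterm
    _ = (#A + #(A.filter (· < 2 ^ k))) * q⁻¹ := by
      rw [sum_add_distrib, ← sum_filter, sum_const, sum_const, nsmul_eq_mul, nsmul_eq_mul, add_mul]
    _ ≤ (a + (2 ^ k - a : ℕ)) * q⁻¹ := by gcongr
    _ = 1 := by
      rw [← Nat.cast_add, Nat.add_sub_cancel' hak.le]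
      push_cast
      exact mul_inv_cancel₀ hq.ne'

lemma schreierTwoNorm_le_one_of_sq_le {x : ℕ → ℝ}
    (hx : ∀ j, x j ^ 2 ≤ ((2 : ℝ) ^ Nat.log 2 j)⁻¹) : schreierTwoNorm x ≤ 1 :=
  schreierTwoNorm_le_one fun _ hA => (sum_le_sum fun j _ => hx j).trans
    (sum_inv_two_pow_log_le_one hA)

lemma tsum_sum_schreierBlock_mul (N : ℕ) (lam x : ℕ → ℝ) :
    ∑' j, (∑ n ∈ Icc 1 N, lam n * schreierBlock n j) * x j =
      ∑ n ∈ Icc 1 N, lam n * ∑ j ∈ dyadicBlock n, schreierBlock n j * x j := by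
  have hzero : ∀ n, ∀ j ∉ dyadicBlock n, lam n * (schreierBlock n j * x j) = 0 := fun n j hj => by
    rw [schreierBlock_eq_zero hj, zero_mul, mul_zero]
  simp_rw [sum_mul, mul_assoc]
  rw [Summable.tsum_finsetSum fun n _ => summable_of_ne_finset_zero (hzero n)]
  refine sum_congr rfl fun n _ => ?_
  rw [tsum_eq_sum (hzero n), mul_sum]

lemma tsum_sum_schreierBlock_mul_le (N : ℕ) {lam : ℕ → ℝ} (hlam : ∀ n, 0 ≤ lam n) {x : ℕ → ℝ}
    (hx : (Function.support x).Finite) (hnorm : schreierTwoNorm x ≤ 1) :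
    ∑' j, (∑ n ∈ Icc 1 N, lam n * schreierBlock n j) * x j ≤ ∑ n ∈ Icc 1 N, lam n := by
  rw [tsum_sum_schreierBlock_mul]
  refine sum_le_sum fun n hn => mul_le_of_le_one_right (hlam n) ?_
  have hn : n ≠ 0 := by rw [mem_Icc] at hn; omega
  calc ∑ j ∈ dyadicBlock n, schreierBlock n j * x j
      ≤ Real.sqrt (∑ j ∈ dyadicBlock n, schreierBlock n j ^ 2) * schreierTwoNorm x :=
        sum_mul_le_schreierTwoNorm hx (admissible_dyadicBlock hn) _
    _ ≤ 1 := by rwa [sum_sq_schreierBlock hn, Real.sqrt_one, one_mul]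

noncomputable def blockSum (N j : ℕ) : ℝ := ∑ n ∈ Icc 1 N, schreierBlock n j

lemma blockSum_eq {N n j : ℕ} (hn : n ∈ Icc 1 N) (hj : j ∈ dyadicBlock n) :
    blockSum N j = schreierBlock n j := by
  refine sum_eq_single n (fun m _ hmn => schreierBlock_eq_zero fun hjm => hmn ?_) (absurd hn)
  rw [(mem_dyadicBlock.1 hj).2, (mem_dyadicBlock.1 hjm).2]

lemma exists_mem_dyadicBlock_of_blockSum_ne_zero {N j : ℕ} (h : blockSum N j ≠ 0) :
    ∃ n ∈ Icc 1 N, j ∈ dyadicBlock n := by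
  obtain ⟨n, hn, hne⟩ := exists_ne_zero_of_sum_ne_zero h
  exact ⟨n, hn, not_imp_comm.1 schreierBlock_eq_zero hne⟩

lemma finite_support_blockSum (N : ℕ) : (Function.support (blockSum N)).Finite :=
  ((Icc 1 N).biUnion dyadicBlock).finite_toSet.subset fun _ hj => by
    simpa using exists_mem_dyadicBlock_of_blockSum_ne_zero hj

lemma schreierTwoNorm_blockSum_le_one (N : ℕ) : schreierTwoNorm (blockSum N) ≤ 1 := by
  refine schreierTwoNorm_le_one_of_sq_le fun j => ?_
  by_cases h : blockSum N j = 0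
  · rw [h, zero_pow two_ne_zero]
    positivity
  obtain ⟨n, hn, hj⟩ := exists_mem_dyadicBlock_of_blockSum_ne_zero h
  rw [blockSum_eq hn hj, schreierBlock_sq hj]

lemma tsum_sum_schreierBlock_mul_blockSum (N : ℕ) (lam : ℕ → ℝ) :
    ∑' j, (∑ n ∈ Icc 1 N, lam n * schreierBlock n j) * blockSum N j = ∑ n ∈ Icc 1 N, lam n := by
  rw [tsum_sum_schreierBlock_mul]
  refine sum_congr rfl fun n hn => ?_
  have hn0 : n ≠ 0 := by rw [mem_Icc] at hn; omega
  rw [sum_congr rfl fun j hj => by rw [blockSum_eq hn hj, ← sq], sum_sq_schreierBlock hn0,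
    mul_one]

theorem statement7_general (N : ℕ) (lam : ℕ → ℝ) (hlam : ∀ n, 0 ≤ lam n) :
    sSup {r : ℝ | ∃ x : ℕ → ℝ, (Function.support x).Finite ∧ schreierTwoNorm x ≤ 1 ∧
        r = ∑' j, (∑ n ∈ Finset.Icc 1 N, lam n * schreierBlock n j) * x j} =
      ∑ n ∈ Finset.Icc 1 N, lam n := by
  refine IsGreatest.csSup_eq ⟨⟨blockSum N, finite_support_blockSum N,
    schreierTwoNorm_blockSum_le_one N, (tsum_sum_schreierBlock_mul_blockSum N lam).symm⟩, ?_⟩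
  rintro r ⟨x, hx, hnorm, rfl⟩
  exact tsum_sum_schreierBlock_mul_le N hlam hx hnorm

/-- For every `N ≥ 1` and nonnegative reals `λ_1, …, λ_N`, the norm of
`∑_{n=1}^N λ_n u_n` as a functional on the space normed by `‖·‖_{S²}` equals `∑_{n=1}^N λ_n`:
the supremum of `∑_j (∑_{n=1}^N λ_n (u_n)_j) x_j` over finitely supported `x` with
`‖x‖_{S²} ≤ 1` is exactly `∑_{n=1}^N λ_n`. -/
theorem statement7 (N : ℕ) (hN : 1 ≤ N) (lam : ℕ → ℝ) (hlam : ∀ n, 0 ≤ lam n) :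
    sSup {r : ℝ | ∃ x : ℕ → ℝ, (Function.support x).Finite ∧ schreierTwoNorm x ≤ 1 ∧
        r = ∑' j, (∑ n ∈ Finset.Icc 1 N, lam n * schreierBlock n j) * x j} =
      ∑ n ∈ Finset.Icc 1 N, lam n :=
  statement7_general N lam hlam
end
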